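/- arXiv:1512.06771 — 4 statements merged into one kernel-verified Lean document; each statement's English description precedes it below -/
import Mathlib

section
/- Let P be a poset and S an uncountable downward directed subset of P. Then S can be written as the union of a chain (under set inclusion) of downward directed subsets of S, each of cardinality strictly less than |S|. -/
/-!
Choose, for every pair `p, q ∈ S`, a common lower bound `f p q ∈ S`. Well-order `S` in the order
type of the initial ordinal of `|S|`: its initial segments form a chain of nonempty subsets of size
`< |S|` covering `S`. Replacing each segment by its closure under `f` keeps the chain monotone and
makes every member directed, and since a closure under a binary operation is a countable union of
finite-step iterates, it has size at most `max |A| ℵ₀`, which is still `< |S|` as `S` is uncountable.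
-/

open Cardinal Set

section BinaryClosure

variable {α : Type*} (f : α → α → α)

def binaryClosureStep (T : Set α) : ℕ → Set α
  | 0 => T
  | n + 1 => binaryClosureStep T n ∪ image2 f (binaryClosureStep T n) (binaryClosureStep T n)

def binaryClosure (T : Set α) : Set α := ⋃ n, binaryClosureStep f T n

theorem binaryClosureStep_mono (T : Set α) : Monotone (binaryClosureStep f T) :=
  monotone_nat_of_le_succ fun _ => subset_union_left

theorem subset_binaryClosure (T : Set α) : T ⊆ binaryClosure f T :=
  subset_iUnion (binaryClosureStep f T) 0

theorem apply_mem_binaryClosure {T : Set α} {p q : α} (hp : p ∈ binaryClosure f T)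
    (hq : q ∈ binaryClosure f T) : f p q ∈ binaryClosure f T := by
  obtain ⟨n, hpn⟩ := mem_iUnion.1 hp
  obtain ⟨m, hqm⟩ := mem_iUnion.1 hq
  refine mem_iUnion.2 ⟨max n m + 1, Or.inr (mem_image2_of_mem ?_ ?_)⟩
  · exact binaryClosureStep_mono f T (le_max_left n m) hpn
  · exact binaryClosureStep_mono f T (le_max_right n m) hqm

theorem binaryClosure_subset {S T : Set α} (hT : T ⊆ S)
    (hS : ∀ p ∈ S, ∀ q ∈ S, f p q ∈ S) : binaryClosure f T ⊆ S := by
  refine iUnion_subset fun n => ?_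
  induction n with
  | zero => exact hT
  | succ n ih =>
    rintro x (hx | ⟨p, hp, q, hq, rfl⟩)
    · exact ih hx
    · exact hS p (ih hp) q (ih hq)

theorem binaryClosure_mono : Monotone (binaryClosure f) := fun _ T hT =>
  binaryClosure_subset f (hT.trans (subset_binaryClosure f T))
    fun _ hp _ hq => apply_mem_binaryClosure f hp hq

theorem mk_binaryClosureStep_le (T : Set α) (n : ℕ) :
    #(binaryClosureStep f T n) ≤ max #T ℵ₀ := by
  induction n with
  | zero => exact le_max_left _ _
  | succ n ih =>
    have hinf : ℵ₀ ≤ max #T ℵ₀ := le_max_right _ _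
    calc #(binaryClosureStep f T (n + 1))
        ≤ #(binaryClosureStep f T n) + #(binaryClosureStep f T n) * #(binaryClosureStep f T n) :=
          (mk_union_le _ _).trans (add_le_add_right mk_image2_le _)
      _ ≤ max #T ℵ₀ + max #T ℵ₀ * max #T ℵ₀ := by gcongr
      _ = max #T ℵ₀ := by rw [mul_eq_self hinf, add_eq_self hinf]

theorem mk_binaryClosure_le (T : Set α) : #(binaryClosure f T) ≤ max #T ℵ₀ := by
  have hinf : ℵ₀ ≤ max #T ℵ₀ := le_max_right _ _
  calc #(binaryClosure f T) ≤ ℵ₀ * ⨆ n, #(binaryClosureStep f T n) := by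
        simpa [binaryClosure] using mk_iUnion_le_lift (binaryClosureStep f T)
    _ ≤ max #T ℵ₀ * max #T ℵ₀ := by
        gcongr
        exact ciSup_le' (mk_binaryClosureStep_le f T)
    _ = max #T ℵ₀ := mul_eq_self hinf

end BinaryClosure

theorem Set.exists_chain_sUnion_eq_of_aleph0_le {α : Type*} (S : Set α) (hS : ℵ₀ ≤ #S) :
    ∃ C : Set (Set α), IsChain (· ⊆ ·) C ∧ (∀ A ∈ C, A.Nonempty ∧ #A < #S) ∧ ⋃₀ C = S := by
  obtain ⟨_, _, hord⟩ := exists_ord_eq_type_lt S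
  have hmono : Monotone fun i : S => ((↑) '' Iic i : Set α) := fun _ _ hij =>
    image_mono (Iic_subset_Iic.2 hij)
  refine ⟨range fun i : S => (↑) '' Iic i, hmono.isChain_range, ?_, ?_⟩
  · rintro _ ⟨i, rfl⟩
    exact ⟨⟨i, i, self_mem_Iic, rfl⟩, mk_image_le.trans_lt (mk_Iic_lt i hord hS)⟩
  · refine (sUnion_range _).trans (Subset.antisymm ?_ fun x hx => ?_)
    · exact iUnion_subset fun i => image_subset_iff.2 fun y _ => y.2
    · exact mem_iUnion.2 ⟨⟨x, hx⟩, ⟨x, hx⟩, self_mem_Iic, rfl⟩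

theorem stmt_6 {P : Type*} [PartialOrder P]
    (S : Set P) (huncount : ¬ S.Countable)
    (hdir : ∀ p ∈ S, ∀ q ∈ S, ∃ r ∈ S, r ≤ p ∧ r ≤ q) :
    ∃ C : Set (Set P),
      IsChain (· ⊆ ·) C ∧
      (∀ A ∈ C, A ⊆ S ∧ A.Nonempty ∧
        (∀ p ∈ A, ∀ q ∈ A, ∃ r ∈ A, r ≤ p ∧ r ≤ q) ∧
        Cardinal.mk A < Cardinal.mk S) ∧
      ⋃₀ C = S := by
  have hS : ℵ₀ < #S := by rwa [← le_aleph0_iff_set_countable, not_le] at huncount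
  choose! f hfS hfle using hdir
  obtain ⟨C, hC, hCmem, hCS⟩ := S.exists_chain_sUnion_eq_of_aleph0_le hS.le
  have hclS : ∀ A ∈ C, binaryClosure f A ⊆ S := fun A hA =>
    binaryClosure_subset f (hCS ▸ subset_sUnion_of_mem hA) hfS
  refine ⟨binaryClosure f '' C, (binaryClosure_mono f).isChain_image hC, ?_, ?_⟩
  · rintro _ ⟨A, hA, rfl⟩
    obtain ⟨hAne, hAS⟩ := hCmem A hA
    refine ⟨hclS A hA, hAne.mono (subset_binaryClosure f A), fun p hp q hq => ?_,
      (mk_binaryClosure_le f A).trans_lt (max_lt hAS hS)⟩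
    exact ⟨f p q, apply_mem_binaryClosure f hp hq, hfle p (hclS A hA hp) q (hclS A hA hq)⟩
  · refine Subset.antisymm (sUnion_subset fun _ ⟨A, hA, hAeq⟩ => hAeq ▸ hclS A hA) ?_
    rw [← hCS]
    exact sUnion_mono_subsets fun A => subset_binaryClosure f A
end

section
/- Let R be a ring, I an ideal, and e ∈ R \ I an idempotent, and let M be an ideal containing I that is maximal with respect to not containing e. Then M is strictly contained in the intersection of all prime ideals of R strictly containing M; in particular M is not the intersection of the prime ideals strictly containing it. -/
/-- A two-sided ideal `M` is prime if it is proper and for all two-sided ideals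
`A, B`, `AB ⊆ M` implies `A ⊆ M` or `B ⊆ M`. -/
def TwoSidedIdeal.IsPrimeIdeal {R : Type*} [Ring R] (M : TwoSidedIdeal R) : Prop :=
  M ≠ ⊤ ∧ ∀ A B : TwoSidedIdeal R, (∀ a ∈ A, ∀ b ∈ B, a * b ∈ M) → A ≤ M ∨ B ≤ M

theorem stmt_9 {R : Type*} [Ring R] (I : TwoSidedIdeal R) (e : R)
    (he : e * e = e) (heI : e ∉ I)
    (M : TwoSidedIdeal R) (hIM : I ≤ M) (heM : e ∉ M)
    (hmax : ∀ J : TwoSidedIdeal R, M ≤ J → e ∉ J → J = M) :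
    (M : Set R) ⊂ {x : R | ∀ J : TwoSidedIdeal R, J.IsPrimeIdeal → M < J → x ∈ J} ∧
    ¬ (M : Set R) = {x : R | ∀ J : TwoSidedIdeal R, J.IsPrimeIdeal → M < J → x ∈ J} := by
  have hsub : (M : Set R) ⊆ {x : R | ∀ J : TwoSidedIdeal R, J.IsPrimeIdeal → M < J → x ∈ J} :=
    fun x hx J _ hMJ => hMJ.le hx
  have hE : e ∈ {x : R | ∀ J : TwoSidedIdeal R, J.IsPrimeIdeal → M < J → x ∈ J} := by
    intro J _ hMJ
    by_contra h
    exact hMJ.ne' (hmax J hMJ.le h)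
  refine ⟨⟨hsub, fun h => heM (h hE)⟩, fun h => heM ?_⟩
  exact show e ∈ (M : Set R) from h ▸ hE
end

section
/- Let P be a poset satisfying: (i) every downward directed subset has a greatest lower bound (GLB), and (ii) for every downward directed subset S and every p ∈ P with p > glb(S), there exists s ∈ S with p ≥ s. If P satisfies KAP (for all p < q there exist p', q' with p ≤ p' < q' ≤ q and no element strictly between p' and q'), then every element not in R(P) — where R(P) is the set of elements that are not greatest lower bounds of downward directed subsets without least element — is the greatest lower bound of some downward directed subset of R(P) without least element (condition DD). -/
namespace StmtX

variable {P : Type*} [PartialOrder P]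

/-- A downward directed (nonempty) subset of `P`. -/
def DirSub (S : Set P) : Prop :=
  S.Nonempty ∧ ∀ p ∈ S, ∀ q ∈ S, ∃ r ∈ S, r ≤ p ∧ r ≤ q

/-- `S` has a least element. -/
def HasLeast (S : Set P) : Prop := ∃ m ∈ S, ∀ x ∈ S, m ≤ x

/-- `R(P)`: elements that are not greatest lower bounds of any downward directed
subset without least element. -/
def RP (P : Type*) [PartialOrder P] : Set P :=
  {p : P | ¬ ∃ S : Set P, DirSub S ∧ ¬ HasLeast S ∧ IsGLB S p}

end StmtX
namespace StmtX
theorem stmt_17 {P : Type*} [PartialOrder P]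
    (hGLB : ∀ S : Set P, DirSub S → ∃ a : P, IsGLB S a)
    (hDC : ∀ (S : Set P) (a : P), DirSub S → IsGLB S a →
      ∀ p : P, a < p → ∃ s ∈ S, s ≤ p)
    (hKAP : ∀ p q : P, p < q → ∃ p' q' : P,
      p ≤ p' ∧ p' < q' ∧ q' ≤ q ∧ ¬ ∃ t : P, p' < t ∧ t < q') :
    ∀ p : P, p ∉ RP P →
      ∃ T : Set P, T ⊆ RP P ∧ DirSub T ∧ ¬ HasLeast T ∧ IsGLB T p := by
  intro p hp
  have hp' : ∃ S : Set P, DirSub S ∧ ¬ HasLeast S ∧ IsGLB S p := by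
    by_contra h
    exact hp h
  obtain ⟨S, hSdir, hSnl, hSglb⟩ := hp'
  have hpnS : p ∉ S := fun h => hSnl ⟨p, h, fun x hx => hSglb.1 hx⟩
  have hps : ∀ s ∈ S, p < s := fun s hs =>
    lt_of_le_of_ne (hSglb.1 hs) (fun h => hpnS (h ▸ hs))
  -- gap left endpoints are in RP
  have hgap : ∀ a b : P, a < b → (¬ ∃ t : P, a < t ∧ t < b) → a ∈ RP P := by
    intro a b hlt hng hmem
    obtain ⟨T', hTd, hTnl, hTg⟩ := hmem
    have hnotmem : a ∉ T' := fun h => hTnl ⟨a, h, fun x hx => hTg.1 hx⟩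
    obtain ⟨t, htT, htb⟩ := hDC T' a hTd hTg b hlt
    have hat : a < t := lt_of_le_of_ne (hTg.1 htT) (fun h => hnotmem (h ▸ htT))
    have htb' : t = b := by
      by_contra h
      exact hng ⟨t, hat, lt_of_le_of_ne htb h⟩
    subst htb'
    have hex : ∃ x ∈ T', ¬ t ≤ x := by
      by_contra h
      push_neg at h
      exact hTnl ⟨t, htT, h⟩
    obtain ⟨x, hxT, hnx⟩ := hex
    obtain ⟨r, hrT, hr1, hr2⟩ := hTd.2 t htT x hxT
    have har : a < r := lt_of_le_of_ne (hTg.1 hrT) (fun h => hnotmem (h ▸ hrT))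
    have hrt : r < t := lt_of_le_of_ne hr1 (fun h => hnx (h ▸ hr2))
    exact hng ⟨r, har, hrt⟩
  -- for each s > p, find p' ∈ RP with p < p' < s
  have key : ∀ s : P, p < s → ∃ p', p' ∈ RP P ∧ p < p' ∧ p' < s := by
    intro s hs
    obtain ⟨a, b, h1, h2, h3, h4⟩ := hKAP p s hs
    have haR : a ∈ RP P := hgap a b h2 h4
    have hpa : p < a := lt_of_le_of_ne h1 (fun h => hp (h ▸ haR))
    exact ⟨a, haR, hpa, lt_of_lt_of_le h2 h3⟩
  refine ⟨{x | x ∈ RP P ∧ p < x}, fun x hx => hx.1, ⟨?_, ?_⟩, ?_, ?_⟩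
  · -- nonempty
    obtain ⟨s, hs⟩ := hSdir.1
    obtain ⟨a, haR, hpa, _⟩ := key s (hps s hs)
    exact ⟨a, haR, hpa⟩
  · -- directed
    rintro x₁ ⟨hx₁R, hpx₁⟩ x₂ ⟨hx₂R, hpx₂⟩
    obtain ⟨s₁, hs₁S, hs₁⟩ := hDC S p hSdir hSglb x₁ hpx₁
    obtain ⟨s₂, hs₂S, hs₂⟩ := hDC S p hSdir hSglb x₂ hpx₂
    obtain ⟨r, hrS, hr1, hr2⟩ := hSdir.2 s₁ hs₁S s₂ hs₂S
    obtain ⟨a, haR, hpa, har⟩ := key r (hps r hrS)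
    exact ⟨a, ⟨haR, hpa⟩, har.le.trans (hr1.trans hs₁), har.le.trans (hr2.trans hs₂)⟩
  · -- no least
    rintro ⟨m, ⟨hmR, hpm⟩, hmin⟩
    obtain ⟨s, hsS, hsm⟩ := hDC S p hSdir hSglb m hpm
    obtain ⟨a, haR, hpa, has⟩ := key s (hps s hsS)
    exact absurd (hmin a ⟨haR, hpa⟩) ((lt_of_lt_of_le has hsm).not_ge)
  · -- glb
    constructor
    · exact fun x hx => hx.2.le
    · intro y hy
      refine hSglb.2 (fun s hs => ?_)
      obtain ⟨a, haR, hpa, has⟩ := key s (hps s hs)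
      exact (hy ⟨haR, hpa⟩).trans has.le
end StmtX
end

section
/- Let P be a poset satisfying GLB and the property that for every downward directed subset S and every p ∈ P with p > glb(S) there exists s ∈ S with p ≥ s. If P satisfies DD, then P satisfies KAP: for all p < q in P there exist p', q' ∈ P with p ≤ p' < q' ≤ q and no element of P strictly between p' and q'. -/
namespace StmtX

/-- Key step: any `r ∈ R(P)` with `r < q` is covered by some `a ≤ q`. -/
theorem cover_above {P : Type*} [PartialOrder P]
    (hGLB : ∀ S : Set P, DirSub S → ∃ a : P, IsGLB S a)
    (r q : P) (hr : r ∈ RP P) (hrq : r < q) :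
    ∃ a, r < a ∧ a ≤ q ∧ ¬ ∃ t : P, r < t ∧ t < a := by
  set F : Set (Set P) := {C | C ⊆ Set.Ioc r q ∧ IsChain (· ≤ ·) C ∧ q ∈ C} with hF
  have hq0 : ({q} : Set P) ∈ F := by
    refine ⟨?_, Set.subsingleton_singleton.isChain, rfl⟩
    intro x hx; rcases hx with rfl; exact ⟨hrq, le_refl _⟩
  have hzorn : ∀ c ⊆ F, IsChain (· ⊆ ·) c → c.Nonempty →
      ∃ ub ∈ F, ∀ s ∈ c, s ⊆ ub := by
      intro c hc hchain hne
      refine ⟨⋃₀ c, ⟨?_, ?_, ?_⟩, fun s hs => Set.subset_sUnion_of_mem hs⟩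
      · intro x hx
        obtain ⟨S, hS, hxS⟩ := hx
        exact (hc hS).1 hxS
      · intro x hx y hy hxy
        obtain ⟨S, hS, hxS⟩ := hx
        obtain ⟨T, hT, hyT⟩ := hy
        rcases hchain.total hS hT with h | h
        · exact (hc hT).2.1 (h hxS) hyT hxy
        · exact (hc hS).2.1 hxS (h hyT) hxy
      · obtain ⟨S, hS⟩ := hne
        exact ⟨S, hS, (hc hS).2.2⟩
  obtain ⟨C, -, hCmem, hCmax⟩ :
      ∃ C, ({q} : Set P) ⊆ C ∧ C ∈ F ∧ ∀ D ∈ F, C ⊆ D → D ⊆ C := by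
    obtain ⟨C, h1, h2⟩ := zorn_subset_nonempty F hzorn _ hq0
    exact ⟨C, h1, h2.1, fun D hD hCD => h2.2 hD hCD⟩
  obtain ⟨hCIoc, hCchain, hqC⟩ := hCmem
  have hCdir : DirSub C := by
    refine ⟨⟨q, hqC⟩, fun x hx y hy => ?_⟩
    rcases eq_or_ne x y with rfl | hne
    · exact ⟨x, hx, le_refl _, le_refl _⟩
    rcases hCchain hx hy hne with h | h
    · exact ⟨x, hx, le_refl _, h⟩
    · exact ⟨y, hy, h, le_refl _⟩
  obtain ⟨a, ha⟩ := hGLB C hCdir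
  have hra : r ≤ a := ha.2 fun x hx => (hCIoc hx).1.le
  have haq : a ≤ q := ha.1 hqC
  have hralt : r < a := by
    rcases lt_or_eq_of_le hra with h | h
    · exact h
    exfalso
    apply hr
    refine ⟨C, hCdir, ?_, h ▸ ha⟩
    rintro ⟨m, hmC, hm⟩
    have : m ≤ a := ha.2 hm
    have : m ≤ r := this.trans h.symm.le
    exact absurd ((hCIoc hmC).1) this.not_gt
  have haC : a ∈ C := by
    have hins : insert a C ∈ F := by
      refine ⟨?_, hCchain.insert fun b hb _ => Or.inl (ha.1 hb), Set.mem_insert_of_mem _ hqC⟩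
      intro x hx
      rcases hx with rfl | hx
      · exact ⟨hralt, haq⟩
      · exact hCIoc hx
    exact hCmax _ hins (Set.subset_insert _ _) (Set.mem_insert _ _)
  refine ⟨a, hralt, haq, ?_⟩
  rintro ⟨t, hrt, hta⟩
  have htq : t ≤ q := hta.le.trans haq
  have hins : insert t C ∈ F := by
    refine ⟨?_, hCchain.insert fun b hb _ => Or.inl (hta.le.trans (ha.1 hb)), Set.mem_insert_of_mem _ hqC⟩
    intro x hx
    rcases hx with rfl | hx
    · exact ⟨hrt, htq⟩
    · exact hCIoc hx
  have htC : t ∈ C := hCmax _ hins (Set.subset_insert _ _) (Set.mem_insert _ _)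
  exact absurd (ha.1 htC) hta.not_ge

theorem stmt_18 {P : Type*} [PartialOrder P]
    (hGLB : ∀ S : Set P, DirSub S → ∃ a : P, IsGLB S a)
    (hDC : ∀ (S : Set P) (a : P), DirSub S → IsGLB S a →
      ∀ p : P, a < p → ∃ s ∈ S, s ≤ p)
    (hDD : ∀ (S : Set P) (a : P), DirSub S → IsGLB S a →
      ∃ T : Set P, T ⊆ RP P ∧ DirSub T ∧ IsGLB T a) :
    ∀ p q : P, p < q → ∃ p' q' : P,
      p ≤ p' ∧ p' < q' ∧ q' ≤ q ∧ ¬ ∃ t : P, p' < t ∧ t < q' := by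
  intro p q hpq
  have hsing : DirSub ({p} : Set P) :=
    ⟨⟨p, rfl⟩, by rintro x rfl y rfl; exact ⟨_, rfl, le_refl _, le_refl _⟩⟩
  obtain ⟨T, hTR, hTdir, hTglb⟩ := hDD ({p} : Set P) p hsing isGLB_singleton
  obtain ⟨s, hsT, hsq⟩ := hDC T p hTdir hTglb q hpq
  have : ¬ q ∈ lowerBounds T := fun h => absurd (hTglb.2 h) hpq.not_ge
  obtain ⟨t, htT, hqt⟩ : ∃ t ∈ T, ¬ q ≤ t := by
    by_contra h
    push_neg at h
    exact this fun x hx => h x hx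
  obtain ⟨r, hrT, hrs, hrt⟩ := hTdir.2 s hsT t htT
  have hrq : r < q := lt_of_le_of_ne (hrs.trans hsq) (by rintro rfl; exact hqt hrt)
  obtain ⟨a, hra, haq, hcov⟩ := cover_above hGLB r q (hTR hrT) hrq
  exact ⟨r, a, hTglb.1 hrT, hra, haq, hcov⟩
end StmtX
end
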